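/- arXiv:2201.06442 — 6 statements merged into one kernel-verified Lean document; each statement's English description precedes it below -/
import Mathlib

section
/- Let X and Y be metric spaces with bounded geometry, with constants R₀ for X and R₀' for Y, let f : X → Y be a coarse embedding, and let ε ≥ max(R₀, R₀'). Then there exist constants α, β > 0 such that for every subset A ⊆ X with finite ε-volume, α·Vol_X^ε(A) ≤ Vol_Y^ε(f(A)) ≤ β·Vol_X^ε(A). -/
/-- `A` can be covered by `n` closed balls of radius `ε`. -/
def CoveredBy {X : Type*} [MetricSpace X] (A : Set X) (ε : ℝ) (n : ℕ) : Prop :=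
  ∃ c : Fin n → X, A ⊆ ⋃ i, Metric.closedBall (c i) ε

/-- The `ε`-volume of a set: the minimal number of closed `ε`-balls needed to cover it. -/
noncomputable def eVol {X : Type*} [MetricSpace X] (ε : ℝ) (A : Set X) : ℕ :=
  sInf {n : ℕ | CoveredBy A ε n}

lemma CoveredBy.mono {X : Type*} [MetricSpace X] {A : Set X} {r r' : ℝ} {n : ℕ}
    (h : CoveredBy A r n) (hr : r ≤ r') : CoveredBy A r' n := by
  obtain ⟨c, hc⟩ := h
  exact ⟨c, hc.trans (Set.iUnion_mono fun i => Metric.closedBall_subset_closedBall hr)⟩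

lemma coveredBy_of_union {X : Type*} [MetricSpace X] {A : Set X} {n N : ℕ} {ε : ℝ}
    (B : Fin n → Set X) (hA : A ⊆ ⋃ i, B i) (hB : ∀ i, CoveredBy (B i) ε N) :
    CoveredBy A ε (n * N) := by
  choose c hc using hB
  refine ⟨fun k => c (finProdFinEquiv.symm k).1 (finProdFinEquiv.symm k).2, ?_⟩
  intro a ha
  obtain ⟨i, hi⟩ := Set.mem_iUnion.1 (hA ha)
  obtain ⟨j, hj⟩ := Set.mem_iUnion.1 (hc i hi)
  exact Set.mem_iUnion.2 ⟨finProdFinEquiv (i, j), by simpa using hj⟩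

/-- A coarse embedding between metric spaces of bounded geometry coarsely
preserves the `ε`-volume, for `ε ≥ max (R₀, R₀')`. -/
theorem coarse_embedding_preserves_volume {X Y : Type*} [MetricSpace X] [MetricSpace Y]
    (R₀ R₀' ε : ℝ) (hR₀ : 0 ≤ R₀) (hR₀' : 0 ≤ R₀')
    (hXbg : ∀ R : ℝ, 0 ≤ R → ∃ N : ℕ, ∀ x : X, CoveredBy (Metric.closedBall x R) R₀ N)
    (hYbg : ∀ R : ℝ, 0 ≤ R → ∃ N : ℕ, ∀ y : Y, CoveredBy (Metric.closedBall y R) R₀' N)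
    (hε : max R₀ R₀' ≤ ε)
    (f : X → Y)
    (hf : ∃ ρm ρp : ℝ → ℝ,
        MonotoneOn ρm (Set.Ici 0) ∧ MonotoneOn ρp (Set.Ici 0) ∧
        (∀ r : ℝ, 0 ≤ r → 0 ≤ ρm r) ∧ (∀ r : ℝ, 0 ≤ r → 0 ≤ ρp r) ∧
        Filter.Tendsto ρm Filter.atTop Filter.atTop ∧
        (∀ x y : X, ρm (dist x y) ≤ dist (f x) (f y) ∧ dist (f x) (f y) ≤ ρp (dist x y))) :
    ∃ α β : ℝ, 0 < α ∧ 0 < β ∧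
      ∀ A : Set X, {n : ℕ | CoveredBy A ε n}.Nonempty →
        {n : ℕ | CoveredBy (f '' A) ε n}.Nonempty ∧
        α * (eVol ε A : ℝ) ≤ (eVol ε (f '' A) : ℝ) ∧
        (eVol ε (f '' A) : ℝ) ≤ β * (eVol ε A : ℝ) := by
  obtain ⟨ρm, ρp, hρm_mono, hρp_mono, hρm_nn, hρp_nn, hρm_top, hρ⟩ := hf
  have hR₀ε : R₀ ≤ ε := (le_max_left _ _).trans hε
  have hR₀'ε : R₀' ≤ ε := (le_max_right _ _).trans hε
  have hε0 : 0 ≤ ε := hR₀.trans hR₀ε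
  -- Y bounded geometry constant for radius ρp ε
  obtain ⟨N', hN'⟩ := hYbg (ρp ε) (hρp_nn ε hε0)
  -- choose S with ρm s ≥ 2ε+1 for s ≥ S
  obtain ⟨S, hS⟩ := Filter.eventually_atTop.1 (Filter.tendsto_atTop.1 hρm_top (2 * ε + 1))
  set S' : ℝ := max S 0 with hS'def
  have hS'0 : 0 ≤ S' := le_max_right _ _
  obtain ⟨N, hN⟩ := hXbg S' hS'0
  -- Claim 1: pushing a cover forward
  have claim1 : ∀ (A : Set X) (n : ℕ), CoveredBy A ε n → CoveredBy (f '' A) ε (n * N') := by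
    intro A n ⟨c, hc⟩
    refine coveredBy_of_union (fun i => Metric.closedBall (f (c i)) (ρp ε)) ?_
      (fun i => (hN' (f (c i))).mono hR₀'ε)
    rintro y ⟨a, ha, rfl⟩
    obtain ⟨i, hi⟩ := Set.mem_iUnion.1 (hc ha)
    refine Set.mem_iUnion.2 ⟨i, ?_⟩
    have hd : dist a (c i) ≤ ε := hi
    calc dist (f a) (f (c i)) ≤ ρp (dist a (c i)) := (hρ a (c i)).2
      _ ≤ ρp ε := hρp_mono dist_nonneg hε0 hd
  -- Claim 2: pulling a cover back (for nonempty A)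
  have claim2 : ∀ (A : Set X), A.Nonempty → ∀ (m : ℕ),
      CoveredBy (f '' A) ε m → CoveredBy A ε (m * N) := by
    intro A ⟨a₀, ha₀⟩ m ⟨y, hy⟩
    classical
    set g : Fin m → X := fun j =>
      if h : (A ∩ f ⁻¹' Metric.closedBall (y j) ε).Nonempty then h.choose else a₀ with hg
    refine coveredBy_of_union (fun j => Metric.closedBall (g j) S') ?_
      (fun j => (hN (g j)).mono hR₀ε)
    intro a ha
    obtain ⟨j, hj⟩ := Set.mem_iUnion.1 (hy ⟨a, ha, rfl⟩)
    have hne : (A ∩ f ⁻¹' Metric.closedBall (y j) ε).Nonempty := ⟨a, ha, hj⟩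
    have hgj : g j ∈ A ∩ f ⁻¹' Metric.closedBall (y j) ε := by
      rw [hg]; simp only [hne, dif_pos]; exact hne.choose_spec
    have hdist : dist (f a) (f (g j)) ≤ 2 * ε := by
      have h1 : dist (f a) (y j) ≤ ε := hj
      have h2 : dist (f (g j)) (y j) ≤ ε := hgj.2
      calc dist (f a) (f (g j)) ≤ dist (f a) (y j) + dist (f (g j)) (y j) :=
            dist_triangle_right _ _ _
        _ ≤ 2 * ε := by linarith
    refine Set.mem_iUnion.2 ⟨j, ?_⟩
    show dist a (g j) ≤ S'
    by_contra h'
    push_neg at h'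
    have hSle : S ≤ dist a (g j) := (le_max_left S 0).trans h'.le
    have : 2 * ε + 1 ≤ dist (f a) (f (g j)) :=
      (hS _ hSle).trans ((hρ a (g j)).1)
    linarith
  -- Now the main conclusion
  refine ⟨1 / (N + 1), N' + 1, by positivity, by positivity, ?_⟩
  intro A hAne
  have hnA : CoveredBy A ε (eVol ε A) := Nat.sInf_mem hAne
  have himg : CoveredBy (f '' A) ε (eVol ε A * N') := claim1 _ _ hnA
  have himgne : {n : ℕ | CoveredBy (f '' A) ε n}.Nonempty := ⟨_, himg⟩
  refine ⟨himgne, ?_, ?_⟩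
  · -- lower bound
    rcases A.eq_empty_or_nonempty with rfl | hA
    · have h0 : eVol ε (∅ : Set X) = 0 := by
        have : CoveredBy (∅ : Set X) ε 0 := ⟨Fin.elim0, by simp⟩
        exact Nat.le_zero.1 (Nat.sInf_le this)
      simp [h0]
    · have hm : CoveredBy (f '' A) ε (eVol ε (f '' A)) := Nat.sInf_mem himgne
      have hback : CoveredBy A ε (eVol ε (f '' A) * N) := claim2 A hA _ hm
      have h1 : eVol ε A ≤ eVol ε (f '' A) * N := Nat.sInf_le hback
      have h2 : (eVol ε A : ℝ) ≤ (eVol ε (f '' A) : ℝ) * N := by exact_mod_cast h1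
      rw [div_mul_eq_mul_div, div_le_iff₀ (by positivity)]
      have hN1 : (eVol ε (f '' A) : ℝ) * N ≤ (eVol ε (f '' A) : ℝ) * (N + 1) := by
        have : (0:ℝ) ≤ (eVol ε (f '' A) : ℝ) := Nat.cast_nonneg _
        nlinarith
      linarith
  · -- upper bound
    have h1 : eVol ε (f '' A) ≤ eVol ε A * N' := Nat.sInf_le himg
    have h2 : (eVol ε (f '' A) : ℝ) ≤ (eVol ε A : ℝ) * N' := by exact_mod_cast h1
    have : (eVol ε A : ℝ) * N' ≤ (N' + 1) * (eVol ε A : ℝ) := by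
      have : (0:ℝ) ≤ (eVol ε A : ℝ) := Nat.cast_nonneg _
      nlinarith
    linarith
end

section
/- Let X be a metric space, let ε > 0 and δ > 0, and suppose there exists an integer p such that every closed ball of radius δ + ε in X can be covered by p closed balls of radius ε. Then for every subset A ⊆ X with finite ε-volume, the closed δ-neighborhood N_δ(A) = {x ∈ X : d(x, A) ≤ δ} satisfies Vol_X^ε(N_δ(A)) ≤ p · Vol_X^ε(A). -/
open Metric Set

theorem Metric.cthickening_subset_iUnion_closedBall_add {X : Type*} [PseudoMetricSpace X]
    {ι : Type*} [Finite ι] {A : Set X} {c : ι → X} {ε δ : ℝ} (hε : 0 ≤ ε) (hδ : 0 ≤ δ)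
    (hA : A ⊆ ⋃ i, closedBall (c i) ε) :
    cthickening δ A ⊆ ⋃ i, closedBall (c i) (δ + ε) := by
  have hc : IsCompact (range c) := (finite_range c).isCompact
  have hA' : A ⊆ cthickening ε (range c) := by
    rwa [hc.cthickening_eq_biUnion_closedBall hε, biUnion_range]
  calc cthickening δ A ⊆ cthickening δ (cthickening ε (range c)) :=
        cthickening_subset_of_subset δ hA'
    _ ⊆ cthickening (δ + ε) (range c) := cthickening_cthickening_subset hδ hε _
    _ = ⋃ i, closedBall (c i) (δ + ε) := by
        rw [hc.cthickening_eq_biUnion_closedBall (add_nonneg hδ hε), biUnion_range]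

section CoveredBy

variable {X : Type*} [MetricSpace X] {A : Set X} {ε : ℝ} {n : ℕ}

theorem CoveredBy.of_fintype {ι : Type*} [Fintype ι] (c : ι → X)
    (hA : A ⊆ ⋃ i, closedBall (c i) ε) : CoveredBy A ε (Fintype.card ι) := by
  refine ⟨c ∘ (Fintype.equivFin ι).symm, hA.trans fun x hx => ?_⟩
  obtain ⟨i, hi⟩ := mem_iUnion.mp hx
  exact mem_iUnion.mpr ⟨Fintype.equivFin ι i, by simpa using hi⟩

theorem CoveredBy.cthickening {δ : ℝ} {p : ℕ} (hε : 0 ≤ ε) (hδ : 0 ≤ δ)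
    (hp : ∀ x : X, CoveredBy (closedBall x (δ + ε)) ε p) (hA : CoveredBy A ε n) :
    CoveredBy (Metric.cthickening δ A) ε (p * n) := by
  obtain ⟨c, hc⟩ := hA
  choose d hd using fun i => hp (c i)
  have hcover : Metric.cthickening δ A ⊆ ⋃ ij : Fin n × Fin p, closedBall (d ij.1 ij.2) ε := by
    rw [iUnion_prod']
    exact (cthickening_subset_iUnion_closedBall_add hε hδ hc).trans (iUnion_mono hd)
  simpa [mul_comm] using CoveredBy.of_fintype _ hcover

theorem eVol_le (hA : CoveredBy A ε n) : eVol ε A ≤ n :=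
  Nat.sInf_le hA

theorem coveredBy_eVol (hA : {n : ℕ | CoveredBy A ε n}.Nonempty) : CoveredBy A ε (eVol ε A) :=
  Nat.sInf_mem hA

end CoveredBy

/-- The `ε`-volume of the closed `δ`-neighborhood of a set is controlled by the
`ε`-volume of the set, provided every ball of radius `δ + ε` is covered by `p`
balls of radius `ε`. -/
theorem eVol_cthickening_le {X : Type*} [MetricSpace X] (ε δ : ℝ) (hε : 0 < ε) (hδ : 0 < δ)
    (p : ℕ) (hp : ∀ x : X, CoveredBy (Metric.closedBall x (δ + ε)) ε p)
    (A : Set X) (hA : {n : ℕ | CoveredBy A ε n}.Nonempty) :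
    eVol ε (Metric.cthickening δ A) ≤ p * eVol ε A :=
  eVol_le ((coveredBy_eVol hA).cthickening hε.le hδ.le hp)
end

section
/- Let X and Y be metric spaces with bounded geometry with constants R₀ and R₀' respectively, and let ε ≥ max(R₀, R₀'). Suppose X has exponential growth with respect to ε: there exists γ > 0 such that Vol_X^ε(B(x,R)) ≥ e^{γR} for every x ∈ X and R > 0; and Y has at most exponential growth with respect to ε: there exists λ > 0 such that Vol_Y^ε(B(y,R)) ≤ e^{λR} for every y ∈ Y and R > 0. Then there is no coarse embedding f : X → Y whose upper control ρ₊ is sublinear (i.e. ρ₊(r)/r → 0 as r → ∞). -/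
/-- A metric space of exponential growth admits no coarse embedding with sublinear
upper control into a metric space of at most exponential growth. -/
theorem no_sublinear_coarse_embedding {X Y : Type*} [MetricSpace X] [MetricSpace Y]
    [Nonempty X]
    (R₀ R₀' ε : ℝ) (hR₀ : 0 ≤ R₀) (hR₀' : 0 ≤ R₀')
    (hXbg : ∀ R : ℝ, 0 ≤ R → ∃ N : ℕ, ∀ x : X, CoveredBy (Metric.closedBall x R) R₀ N)
    (hYbg : ∀ R : ℝ, 0 ≤ R → ∃ N : ℕ, ∀ y : Y, CoveredBy (Metric.closedBall y R) R₀' N)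
    (hε : max R₀ R₀' ≤ ε)
    (γ : ℝ) (hγ : 0 < γ)
    (hXgrowth : ∀ (x : X) (R : ℝ), 0 < R → ∀ n : ℕ,
      CoveredBy (Metric.closedBall x R) ε n → Real.exp (γ * R) ≤ (n : ℝ))
    (lam : ℝ) (hlam : 0 < lam)
    (hYgrowth : ∀ (y : Y) (R : ℝ), 0 < R → ∃ n : ℕ,
      CoveredBy (Metric.closedBall y R) ε n ∧ (n : ℝ) ≤ Real.exp (lam * R)) :
    ¬ ∃ (f : X → Y) (ρm ρp : ℝ → ℝ),
        MonotoneOn ρm (Set.Ici 0) ∧ MonotoneOn ρp (Set.Ici 0) ∧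
        (∀ r : ℝ, 0 ≤ r → 0 ≤ ρm r) ∧ (∀ r : ℝ, 0 ≤ r → 0 ≤ ρp r) ∧
        Filter.Tendsto ρm Filter.atTop Filter.atTop ∧
        (∀ x y : X, ρm (dist x y) ≤ dist (f x) (f y) ∧ dist (f x) (f y) ≤ ρp (dist x y)) ∧
        Filter.Tendsto (fun r : ℝ => ρp r / r) Filter.atTop (nhds 0) := by
  rintro ⟨f, ρm, ρp, hρm_mono, hρp_mono, hρm_nn, hρp_nn, hρm_top, hctrl, hρp_sub⟩
  obtain ⟨x⟩ := ‹Nonempty X›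
  have hR₀ε : R₀ ≤ ε := (le_max_left R₀ R₀').trans hε
  have hε0 : (0:ℝ) ≤ ε := hR₀.trans hR₀ε
  -- choose S such that dist (f u) (f v) ≤ 2ε → dist u v ≤ S
  obtain ⟨S₀, hS₀⟩ := Filter.eventually_atTop.mp (hρm_top.eventually_gt_atTop (2*ε))
  set S : ℝ := max S₀ 0 with hS_def
  have hS0 : (0:ℝ) ≤ S := le_max_right _ _
  have hclose : ∀ u v : X, dist (f u) (f v) ≤ 2*ε → dist u v ≤ S := by
    intro u v h
    by_contra hcon
    push_neg at hcon
    have h1 : S₀ ≤ dist u v := le_of_lt (lt_of_le_of_lt (le_max_left _ _) hcon)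
    have h2 := hS₀ _ h1
    have h3 := (hctrl u v).1
    linarith
  -- bounded geometry constant for balls of radius S in X
  obtain ⟨N, hN⟩ := hXbg S hS0
  -- N ≥ 1
  have hN1 : 0 < N := by
    obtain ⟨c, hc⟩ := hN x
    obtain ⟨i, -⟩ := Set.mem_iUnion.mp (hc (Metric.mem_closedBall_self hS0))
    exact i.pos
  have hNpos : (0:ℝ) < N := by exact_mod_cast hN1
  -- sublinearity: eventually ρp r / r < γ / (2 lam)
  obtain ⟨r₀, hr₀⟩ := Filter.eventually_atTop.mp
    (hρp_sub.eventually_lt_const (show (0:ℝ) < γ/(2*lam) by positivity))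
  -- choose R large
  set R : ℝ := max (max r₀ 1) (2*(lam + Real.log N)/γ + 1) with hR_def
  have hR1 : (1:ℝ) ≤ R := le_trans (le_max_right r₀ 1) (le_max_left _ _)
  have hRpos : (0:ℝ) < R := lt_of_lt_of_le one_pos hR1
  have hRr₀ : r₀ ≤ R := le_trans (le_max_left r₀ 1) (le_max_left _ _)
  have hRbig : 2*(lam + Real.log N)/γ + 1 ≤ R := le_max_right _ _
  -- bound lam * ρp R < γ R / 2
  have hfrac : ρp R / R < γ/(2*lam) := hr₀ R hRr₀
  have h1 : lam * ρp R < γ * R / 2 := by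
    have h1' : ρp R < γ/(2*lam) * R := (div_lt_iff₀ hRpos).mp hfrac
    have := mul_lt_mul_of_pos_left h1' hlam
    have heq : lam * (γ/(2*lam) * R) = γ * R / 2 := by field_simp
    linarith [heq ▸ this]
  -- bound lam + log N < γ R / 2
  have h2 : lam + Real.log N < γ * R / 2 := by
    have heq : γ * (2*(lam + Real.log N)/γ) = 2*(lam + Real.log N) := by field_simp
    nlinarith [mul_le_mul_of_nonneg_left hRbig hγ.le]
  -- cover the image ball
  have hρpR0 : 0 ≤ ρp R := hρp_nn R hRpos.le
  obtain ⟨n, ⟨c, hc⟩, hn⟩ := hYgrowth (f x) (ρp R + 1) (by linarith)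
  -- for each piece of the cover, the preimage within the ball lies in a ball of radius S
  have hz' : ∀ i : Fin n, ∃ zi : X, ∀ u, u ∈ Metric.closedBall x R →
      f u ∈ Metric.closedBall (c i) ε → u ∈ Metric.closedBall zi S := by
    intro i
    by_cases h : ∃ u, u ∈ Metric.closedBall x R ∧ f u ∈ Metric.closedBall (c i) ε
    · obtain ⟨v, hv, hfv⟩ := h
      refine ⟨v, fun u hu hfu => ?_⟩
      rw [Metric.mem_closedBall]
      apply hclose
      calc dist (f u) (f v) ≤ dist (f u) (c i) + dist (c i) (f v) := dist_triangle _ _ _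
        _ ≤ ε + ε := add_le_add (Metric.mem_closedBall.mp hfu)
            (by rw [dist_comm]; exact Metric.mem_closedBall.mp hfv)
        _ = 2*ε := by ring
    · exact ⟨x, fun u hu hfu => absurd ⟨u, hu, hfu⟩ h⟩
  choose z hz using hz'
  choose c' hc' using fun i => hN (z i)
  -- compose the covers
  have hcov : CoveredBy (Metric.closedBall x R) ε (n * N) := by
    refine ⟨fun k => c' (finProdFinEquiv.symm k).1 (finProdFinEquiv.symm k).2, ?_⟩
    intro u hu
    have hdux : dist u x ≤ R := Metric.mem_closedBall.mp hu
    have hfu : f u ∈ Metric.closedBall (f x) (ρp R + 1) := by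
      rw [Metric.mem_closedBall]
      have hmono := hρp_mono (Set.mem_Ici.mpr dist_nonneg) (Set.mem_Ici.mpr hRpos.le) hdux
      linarith [(hctrl u x).2]
    obtain ⟨i, hi⟩ := Set.mem_iUnion.mp (hc hfu)
    have hu' : u ∈ Metric.closedBall (z i) S := hz i u hu hi
    obtain ⟨j, hj⟩ := Set.mem_iUnion.mp (hc' i hu')
    refine Set.mem_iUnion.mpr ⟨finProdFinEquiv (i, j), ?_⟩
    simp only [Equiv.symm_apply_apply]
    exact Metric.closedBall_subset_closedBall hR₀ε hj
  have hlow := hXgrowth x R hRpos (n * N) hcov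
  -- numerical contradiction
  have key : Real.exp (γ * R) ≤ Real.exp (lam * (ρp R + 1) + Real.log N) := by
    calc Real.exp (γ * R) ≤ ((n * N : ℕ) : ℝ) := hlow
      _ = (n : ℝ) * (N : ℝ) := by push_cast; ring
      _ ≤ Real.exp (lam * (ρp R + 1)) * (N : ℝ) :=
          mul_le_mul_of_nonneg_right hn (Nat.cast_nonneg N)
      _ = Real.exp (lam * (ρp R + 1)) * Real.exp (Real.log N) := by
          rw [Real.exp_log hNpos]
      _ = Real.exp (lam * (ρp R + 1) + Real.log N) := (Real.exp_add _ _).symm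
  have hexp : lam * (ρp R + 1) + Real.log N < γ * R := by
    have : lam * (ρp R + 1) = lam * ρp R + lam := by ring
    linarith
  exact absurd (key.trans_lt (Real.exp_lt_exp.mpr hexp)) (lt_irrefl _)
end

section
/- Let E be a finite-dimensional real inner product space, let (h₁, …, h_p) be a basis of E with ⟨h_i, h_j⟩ ≤ 0 for all i ≠ j, and let (e₁, …, e_p) be the dual basis, characterized by ⟨h_i, e_j⟩ = 1 if i = j and 0 otherwise. Then the open cone C = {x ∈ E : ⟨h_i, x⟩ > 0 for all i} is an open simplicial cone: C = {∑_{i=1}^p t_i e_i : t_i > 0 for all i}; and C is acute: for all x, y ∈ C one has ⟨x, y⟩ > 0. -/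
open scoped RealInnerProductSpace
open Finset

/-!
Write `y = u - w` with `u` and `w` the combinations of the basis vectors with the positive and
negative parts of the coordinates of `y`. Since these have disjoint supports, obtuseness gives
`⟪w, u⟫ ≤ 0`, while `⟪w, y⟫ ≥ 0` as soon as every `⟪b i, y⟫ ≥ 0`; hence `‖w‖² ≤ 0`, so the
closed sector has nonnegative coordinates. Acuteness follows by expanding `⟪x, y⟫` in the
coordinates of `y`, and the description by the dual basis is coordinate bookkeeping.
-/

section

variable {ι E : Type*} [Fintype ι] [NormedAddCommGroup E] [InnerProductSpace ℝ E]

theorem inner_sum_smul_nonpos_of_mul_eq_zero {v : ι → E}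
    (hv : Pairwise fun i j => ⟪v i, v j⟫ ≤ 0) {f g : ι → ℝ} (hf : 0 ≤ f) (hg : 0 ≤ g)
    (hfg : ∀ i, f i * g i = 0) : ⟪∑ i, f i • v i, ∑ j, g j • v j⟫ ≤ 0 := by
  rw [sum_inner]
  refine sum_nonpos fun i _ => ?_
  rw [inner_sum]
  refine sum_nonpos fun j _ => ?_
  rw [real_inner_smul_left, real_inner_smul_right, ← mul_assoc]
  obtain rfl | hij := eq_or_ne i j
  · simp [hfg]
  · exact mul_nonpos_of_nonneg_of_nonpos (mul_nonneg (hf i) (hg j)) (hv hij)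

namespace Module.Basis

theorem repr_nonneg_of_inner_nonneg (b : Basis ι ℝ E)
    (hb : Pairwise fun i j => ⟪b i, b j⟫ ≤ 0) {y : E} (hy : ∀ i, 0 ≤ ⟪b i, y⟫) :
    0 ≤ ⇑(b.repr y) := by
  set c : ι → ℝ := ⇑(b.repr y)
  set u := ∑ i, c⁺ i • b i
  set w := ∑ i, c⁻ i • b i
  have hyuw : y = u - w := by
    conv_lhs => rw [← b.sum_repr y]
    simp only [u, w, ← sum_sub_distrib, ← sub_smul, Pi.posPart_apply, Pi.negPart_apply,
      posPart_sub_negPart, c]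
  have hwu : ⟪w, u⟫ ≤ 0 :=
    inner_sum_smul_nonpos_of_mul_eq_zero hb (negPart_nonneg c) (posPart_nonneg c)
      fun i => by simp [le_total]
  have hwy : 0 ≤ ⟪w, y⟫ := by
    rw [sum_inner]
    exact sum_nonneg fun i _ => by
      rw [real_inner_smul_left]
      exact mul_nonneg (negPart_nonneg (c i)) (hy i)
  have hw : w = 0 := real_inner_self_nonpos.mp <|
    calc ⟪w, w⟫ = ⟪w, u⟫ - ⟪w, y⟫ := by rw [← inner_sub_right, hyuw, sub_sub_cancel]
      _ ≤ 0 := by linarith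
  have hc : c⁻ = 0 := by
    rw [← b.repr_sum_self c⁻, show ∑ i, c⁻ i • b i = w from rfl, hw, map_zero,
      Finsupp.coe_zero]
  exact negPart_eq_zero.mp hc

theorem inner_pos_of_forall_inner_pos_of_forall_inner_nonneg (b : Basis ι ℝ E)
    (hb : Pairwise fun i j => ⟪b i, b j⟫ ≤ 0) {x y : E} (hx : ∀ i, 0 < ⟪b i, x⟫)
    (hy : ∀ i, 0 ≤ ⟪b i, y⟫) (hy₀ : y ≠ 0) : 0 < ⟪x, y⟫ := by
  have hc : 0 ≤ ⇑(b.repr y) := b.repr_nonneg_of_inner_nonneg hb hy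
  obtain ⟨i, hi⟩ : ∃ i, b.repr y i ≠ 0 := by
    by_contra! h
    exact hy₀ (b.repr.map_eq_zero_iff.mp (Finsupp.ext h))
  rw [← b.sum_repr y, inner_sum]
  refine sum_pos' (fun j _ => ?_) ⟨i, mem_univ i, ?_⟩
  · rw [real_inner_smul_right, real_inner_comm]
    exact mul_nonneg (hc j) (hx j).le
  · rw [real_inner_smul_right, real_inner_comm]
    exact mul_pos ((hc i).lt_of_ne' hi) (hx i)

end Module.Basis

theorem inner_sum_smul_eq_of_biorthogonal [DecidableEq ι] {b e : ι → E}
    (hbe : ∀ i j, ⟪b i, e j⟫ = if i = j then 1 else 0) (t : ι → ℝ) (i : ι) :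
    ⟪b i, ∑ j, t j • e j⟫ = t i := by
  simp [inner_sum, real_inner_smul_right, hbe]

theorem Module.Basis.eq_sum_inner_smul_of_biorthogonal [DecidableEq ι] (b : Basis ι ℝ E)
    {e : ι → E} (hbe : ∀ i j, ⟪b i, e j⟫ = if i = j then 1 else 0) (x : E) :
    x = ∑ i, ⟪b i, x⟫ • e i :=
  InnerProductSpace.ext_inner_left_basis b fun i =>
    (inner_sum_smul_eq_of_biorthogonal hbe (fun j => ⟪b j, x⟫) i).symm

end

/-- A Weyl sector is an acute open simplicial cone: the cone determined by a basis
with pairwise nonpositive inner products consists exactly of the positive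
combinations of the dual basis vectors, and any two of its elements have positive
inner product. -/
theorem weyl_sector_acute_simplicial_cone
    {E : Type*} [NormedAddCommGroup E] [InnerProductSpace ℝ E]
    (p : ℕ) (hp : 0 < p) (b : Module.Basis (Fin p) ℝ E)
    (hobtuse : ∀ i j : Fin p, i ≠ j → ⟪b i, b j⟫ ≤ 0)
    (e : Fin p → E) (hdual : ∀ i j : Fin p, ⟪b i, e j⟫ = if i = j then 1 else 0) :
    {x : E | ∀ i, 0 < ⟪b i, x⟫} =
        {x : E | ∃ t : Fin p → ℝ, (∀ i, 0 < t i) ∧ x = ∑ i, t i • e i} ∧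
      ∀ x ∈ {x : E | ∀ i, 0 < ⟪b i, x⟫}, ∀ y ∈ {x : E | ∀ i, 0 < ⟪b i, x⟫},
        0 < ⟪x, y⟫ := by
  constructor
  · ext x
    refine ⟨fun hx => ⟨_, hx, b.eq_sum_inner_smul_of_biorthogonal hdual x⟩, ?_⟩
    rintro ⟨t, ht, rfl⟩ i
    exact (inner_sum_smul_eq_of_biorthogonal hdual t i).symm ▸ ht i
  · intro x hx y hy
    have hy₀ : y ≠ 0 := by
      rintro rfl
      simpa using hy ⟨0, hp⟩
    exact b.inner_pos_of_forall_inner_pos_of_forall_inner_nonneg (fun i j => hobtuse i j) hx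
      (fun i => (hy i).le) hy₀
end

section
/- There is no sequence (β_n)_{n ≥ 1} of real numbers such that β is strictly decreasing (β_n > β_{n+1} for all n ≥ 1), β_n > 0 for all n ≥ 1, and for every integer p ≥ 2 one has ∑_{i=1}^{p} β_i < p·β_{p−1} (equivalently, (∑_{i=1}^{p} β_i)/p < β_{p−1}). -/
/-- There is no infinite sequence of positive, strictly decreasing exponents
`β n` satisfying `β 1 + ⋯ + β p < p · β (p−1)` for every `p ≥ 2`. -/
theorem no_infinite_exponent_sequence :
    ¬ ∃ β : ℕ → ℝ,
        (∀ n : ℕ, 1 ≤ n → β (n + 1) < β n) ∧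
        (∀ n : ℕ, 1 ≤ n → 0 < β n) ∧
        (∀ p : ℕ, 2 ≤ p → ∑ i ∈ Finset.Icc 1 p, β i < (p : ℝ) * β (p - 1)) := by
  rintro ⟨β, hdec, hpos, hsum⟩
  -- β is decreasing on [1, ∞)
  have hmono : ∀ m n : ℕ, 1 ≤ m → m ≤ n → β n ≤ β m := by
    intro m n hm hmn
    induction n, hmn using Nat.le_induction with
    | base => exact le_rfl
    | succ n hn ih => exact le_trans (le_of_lt (hdec n (le_trans hm hn))) ih
  set d : ℕ → ℝ := fun n => β n - β (n + 1) with hd_def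
  have hd : ∀ n : ℕ, 1 ≤ n → 0 < d n := fun n hn => sub_pos.2 (hdec n hn)
  -- key: n * d n < d (n+1)
  have key : ∀ n : ℕ, 1 ≤ n → (n : ℝ) * d n < d (n + 1) := by
    intro n hn
    have hs := hsum (n + 2) (by omega)
    have hsplit : ∑ i ∈ Finset.Icc 1 (n + 2), β i
        = (∑ i ∈ Finset.Icc 1 n, β i) + β (n + 1) + β (n + 2) := by
      rw [Finset.sum_Icc_succ_top (by omega : 1 ≤ n + 2),
        Finset.sum_Icc_succ_top (by omega : 1 ≤ n + 1)]
    have hlow : (n : ℝ) * β n ≤ ∑ i ∈ Finset.Icc 1 n, β i := by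
      have := Finset.card_nsmul_le_sum (Finset.Icc 1 n) β (β n)
        (fun i hi => by
          simp only [Finset.mem_Icc] at hi
          exact hmono i n hi.1 hi.2)
      simpa [Nat.card_Icc, nsmul_eq_mul] using this
    have hcast : ((n + 2 : ℕ) : ℝ) = (n : ℝ) + 2 := by push_cast; ring
    rw [hsplit] at hs
    have he : n + 2 - 1 = n + 1 := rfl
    rw [he, hcast] at hs
    simp only [hd_def]
    nlinarith [hs, hlow]
  -- d is increasing on [1, ∞), hence d n ≥ d 1 for n ≥ 1
  have hge : ∀ n : ℕ, 1 ≤ n → d 1 ≤ d n := by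
    intro n hn
    induction n, hn using Nat.le_induction with
    | base => exact le_rfl
    | succ n hn ih =>
      have h1 : d n ≤ (n : ℝ) * d n := by
        nlinarith [hd n hn, (by exact_mod_cast hn : (1:ℝ) ≤ (n:ℝ))]
      linarith [key n hn]
  -- get a contradiction: d (n+1) > n * d 1 but d (n+1) < β 1
  obtain ⟨n, hnlt⟩ := exists_nat_gt (β 1 / d 1)
  have hd1 : 0 < d 1 := hd 1 le_rfl
  have hn1 : 1 ≤ n := by
    by_contra h
    push_neg at h
    interval_cases n
    simp only [Nat.cast_zero] at hnlt
    linarith [div_pos (hpos 1 le_rfl) hd1]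
  have hb1 : (n : ℝ) * d 1 > β 1 := by
    rw [div_lt_iff₀ hd1] at hnlt
    linarith
  have h2 : (n : ℝ) * d 1 ≤ (n : ℝ) * d n :=
    mul_le_mul_of_nonneg_left (hge n hn1) (Nat.cast_nonneg n)
  have h3 : d (n + 1) < β (n + 1) := by
    have := hpos (n + 2) (by omega)
    simp only [hd_def]; linarith
  have h4 : β (n + 1) ≤ β 1 := hmono 1 (n + 1) le_rfl (by omega)
  linarith [key n hn1]
end

section
/- Let a : (0,∞) → (0,∞) be nonincreasing with a(d) ≥ 1/d for all d > 0 and a(d) → 0 as d → ∞. Fix an integer k ≥ 2, let H_n = ∑_{i=1}^{n} 1/i, S_n = n − H_n, and θ = (H_k − 1)/(k−1) (so 0 ≤ θ < 1). Then a(d^{k−1}·a(d)^{S_{k−1}}) / a(d)^{θ} → 0 as d → ∞; in particular a(d^{k−1}·a(d)^{S_{k−1}}) = o(a(d)^{S_k − (k/(k−1))·S_{k−1}}). -/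
open Filter Asymptotics

/-- The `n`-th harmonic number `H_n = ∑_{i=1}^n 1/i`, as a real number. -/
noncomputable def harmonicR (n : ℕ) : ℝ := ∑ i ∈ Finset.Icc 1 n, (1 : ℝ) / i

lemma one_le_harmonicR (n : ℕ) (hn : 1 ≤ n) : (1 : ℝ) ≤ harmonicR n := by
  unfold harmonicR
  have h1 : (1 : ℕ) ∈ Finset.Icc 1 n := by simp [hn]
  have := Finset.single_le_sum (f := fun i : ℕ => (1 : ℝ) / i)
    (fun i _ => by positivity) h1
  simpa using this

lemma harmonicR_le (n : ℕ) : harmonicR n ≤ n := by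
  unfold harmonicR
  calc ∑ i ∈ Finset.Icc 1 n, (1 : ℝ) / i ≤ ∑ _i ∈ Finset.Icc 1 n, (1 : ℝ) := by
        apply Finset.sum_le_sum
        intro i hi
        simp only [Finset.mem_Icc] at hi
        have h1 : (1 : ℝ) ≤ i := by exact_mod_cast hi.1
        exact div_le_one_of_le₀ h1 (by linarith)
    _ = n := by simp

lemma harmonicR_lt (k : ℕ) (hk : 2 ≤ k) : harmonicR k < k := by
  unfold harmonicR
  calc ∑ i ∈ Finset.Icc 1 k, (1 : ℝ) / i < ∑ _i ∈ Finset.Icc 1 k, (1 : ℝ) := by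
        apply Finset.sum_lt_sum
        · intro i hi
          simp only [Finset.mem_Icc] at hi
          have h1 : (1 : ℝ) ≤ i := by exact_mod_cast hi.1
          exact div_le_one_of_le₀ h1 (by linarith)
        · refine ⟨2, by simp [Finset.mem_Icc]; omega, by norm_num⟩
    _ = k := by simp

lemma harmonicR_succ (k : ℕ) (hk : 1 ≤ k) :
    harmonicR k = harmonicR (k - 1) + 1 / (k : ℝ) := by
  obtain ⟨n, rfl⟩ : ∃ n, k = n + 1 := ⟨k - 1, by omega⟩
  simp only [Nat.add_sub_cancel]
  unfold harmonicR
  rw [Finset.sum_Icc_succ_top (by omega)]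

/-- For a nonincreasing gauge `a` with `1/d ≤ a d` tending to `0`, the quantity
`a (d^{k−1} · a(d)^{S_{k−1}})` is negligible compared with `a(d)^{θ}` where
`θ = (H_k − 1)/(k−1) = S_k − (k/(k−1))·S_{k−1}` and `S_n = n − H_n`. -/
theorem gauge_asymptotic_smallness (a : ℝ → ℝ)
    (hpos : ∀ d : ℝ, 0 < d → 0 < a d)
    (hmono : AntitoneOn a (Set.Ioi (0 : ℝ)))
    (hlow : ∀ d : ℝ, 0 < d → 1 / d ≤ a d)
    (hlim : Tendsto a atTop (nhds 0))
    (k : ℕ) (hk : 2 ≤ k) :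
    Tendsto
        (fun d : ℝ =>
          a (d ^ ((k : ℝ) - 1) * a d ^ (((k : ℝ) - 1) - harmonicR (k - 1))) /
            a d ^ ((harmonicR k - 1) / ((k : ℝ) - 1)))
        atTop (nhds 0) ∧
      (fun d : ℝ =>
          a (d ^ ((k : ℝ) - 1) * a d ^ (((k : ℝ) - 1) - harmonicR (k - 1)))) =o[atTop]
        (fun d : ℝ =>
          a d ^ (((k : ℝ) - harmonicR k) -
            ((k : ℝ) / ((k : ℝ) - 1)) * (((k : ℝ) - 1) - harmonicR (k - 1)))) := by
  have hk2 : (2 : ℝ) ≤ (k : ℝ) := by exact_mod_cast hk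
  have hkpos : (0 : ℝ) < (k : ℝ) - 1 := by linarith
  set θ : ℝ := (harmonicR k - 1) / ((k : ℝ) - 1) with hθdef
  have hH1 : (1 : ℝ) ≤ harmonicR (k - 1) := one_le_harmonicR _ (by omega)
  have hHk1 : (1 : ℝ) ≤ harmonicR k := one_le_harmonicR _ (by omega)
  have hHk : harmonicR k < k := harmonicR_lt k hk
  have hcast : ((k - 1 : ℕ) : ℝ) = (k : ℝ) - 1 := by
    have h1 : (1 : ℕ) ≤ k := by omega
    push_cast [Nat.cast_sub h1]
    ring
  have hHk1le : harmonicR (k - 1) ≤ (k : ℝ) - 1 := by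
    have := harmonicR_le (k - 1)
    rw [hcast] at this
    exact this
  have hS : 0 ≤ (k : ℝ) - 1 - harmonicR (k - 1) := by linarith
  have hθ0 : 0 ≤ θ := div_nonneg (by linarith) (by linarith)
  have hθ1 : θ < 1 := by
    rw [hθdef, div_lt_one hkpos]; linarith
  have key : Tendsto
      (fun d : ℝ =>
        a (d ^ ((k : ℝ) - 1) * a d ^ (((k : ℝ) - 1) - harmonicR (k - 1))) / a d ^ θ)
      atTop (nhds 0) := by
    have lim2 : Tendsto (fun d : ℝ => a d ^ (1 - θ)) atTop (nhds 0) := by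
      have := hlim.rpow_const (Or.inr (by linarith : (0:ℝ) ≤ 1 - θ))
      simpa [Real.zero_rpow (by linarith : (1 : ℝ) - θ ≠ 0)] using this
    have lower : ∀ᶠ d : ℝ in atTop,
        0 ≤ a (d ^ ((k : ℝ) - 1) * a d ^ (((k : ℝ) - 1) - harmonicR (k - 1))) / a d ^ θ := by
      filter_upwards [eventually_gt_atTop (0 : ℝ)] with d hd
      have hx : 0 < d ^ ((k : ℝ) - 1) * a d ^ (((k : ℝ) - 1) - harmonicR (k - 1)) := by
        have := hpos d hd
        positivity
      exact div_nonneg (le_of_lt (hpos _ hx)) (le_of_lt (Real.rpow_pos_of_pos (hpos d hd) θ))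
    have upper : ∀ᶠ d : ℝ in atTop,
        a (d ^ ((k : ℝ) - 1) * a d ^ (((k : ℝ) - 1) - harmonicR (k - 1))) / a d ^ θ
          ≤ a d ^ (1 - θ) := by
      filter_upwards [eventually_ge_atTop (1 : ℝ)] with d hd1
      have hd : (0 : ℝ) < d := lt_of_lt_of_le one_pos hd1
      have had : 0 < a d := hpos d hd
      set S : ℝ := ((k : ℝ) - 1) - harmonicR (k - 1) with hSdef
      have hx : 0 < d ^ ((k : ℝ) - 1) * a d ^ S := by positivity
      have hdx : d ≤ d ^ ((k : ℝ) - 1) * a d ^ S := by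
        have h1 : (1 / d) ^ S ≤ a d ^ S :=
          Real.rpow_le_rpow (by positivity) (hlow d hd) hS
        have h2 : d ^ ((k : ℝ) - 1) * (1 / d) ^ S ≤ d ^ ((k : ℝ) - 1) * a d ^ S := by
          apply mul_le_mul_of_nonneg_left h1 (le_of_lt (Real.rpow_pos_of_pos hd _))
        have h3 : d ^ ((k : ℝ) - 1) * (1 / d) ^ S = d ^ (((k : ℝ) - 1) - S) := by
          rw [one_div, Real.inv_rpow (le_of_lt hd), ← Real.rpow_neg (le_of_lt hd),
            ← Real.rpow_add hd]
          ring_nf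
        have h4 : d ≤ d ^ (((k : ℝ) - 1) - S) := by
          have : ((k : ℝ) - 1) - S = harmonicR (k - 1) := by rw [hSdef]; ring
          rw [this]
          calc d = d ^ (1 : ℝ) := (Real.rpow_one d).symm
            _ ≤ d ^ harmonicR (k - 1) :=
                Real.rpow_le_rpow_of_exponent_le hd1 hH1
        calc d ≤ d ^ (((k : ℝ) - 1) - S) := h4
          _ = d ^ ((k : ℝ) - 1) * (1 / d) ^ S := h3.symm
          _ ≤ d ^ ((k : ℝ) - 1) * a d ^ S := h2
      have hax : a (d ^ ((k : ℝ) - 1) * a d ^ S) ≤ a d :=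
        hmono (Set.mem_Ioi.2 hd) (Set.mem_Ioi.2 hx) hdx
      have hden : 0 < a d ^ θ := Real.rpow_pos_of_pos had θ
      calc a (d ^ ((k : ℝ) - 1) * a d ^ S) / a d ^ θ
          ≤ a d / a d ^ θ := by gcongr
        _ = a d ^ (1 - θ) := by
            rw [Real.rpow_sub had, Real.rpow_one]
    exact tendsto_of_tendsto_of_tendsto_of_le_of_le' tendsto_const_nhds lim2 lower upper
  constructor
  · exact key
  · have hexp : ((k : ℝ) - harmonicR k) -
        ((k : ℝ) / ((k : ℝ) - 1)) * (((k : ℝ) - 1) - harmonicR (k - 1)) = θ := by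
      have hrec : harmonicR k = harmonicR (k - 1) + 1 / (k : ℝ) :=
        harmonicR_succ k (by omega)
      rw [hθdef, hrec]
      have hk0 : (k : ℝ) ≠ 0 := by linarith
      have hk1 : (k : ℝ) - 1 ≠ 0 := ne_of_gt hkpos
      field_simp
      ring
    simp only [hexp]
    rw [isLittleO_iff_tendsto']
    · exact key
    · filter_upwards [eventually_gt_atTop (0 : ℝ)] with d hd h
      exact absurd h (ne_of_gt (Real.rpow_pos_of_pos (hpos d hd) θ))
end
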